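/- Suppose d is a positive integer with r = ord₃(d) ≥ 2, and x, y, n are integers with n ≥ 2 satisfying (x+1)² + ... + (x+d)² = yⁿ. Then n divides r − 1. -/

import Mathlib

/-!
Multiplying by 6, the sum of the squares is `d * A` with
`A = 6x² + 6x(d + 1) + (d + 1)(2d + 1)`, and `A ≡ 1 (mod 3)` as soon as `3 ∣ d`.
Comparing 3-adic valuations in `d * A = 6 yⁿ` gives `ord₃(d) = 1 + n · ord₃(y)`.
-/

theorem six_mul_sum_range_sq_add (d : ℕ) (x : ℤ) :
    6 * ∑ i ∈ Finset.range d, (x + (i : ℤ) + 1) ^ 2 =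
      (d : ℤ) * (6 * x ^ 2 + 6 * x * (d + 1) + (d + 1) * (2 * d + 1)) := by
  induction d with
  | zero => simp
  | succ d ih =>
    rw [Finset.sum_range_succ, mul_add, ih]
    push_cast
    ring

theorem not_three_dvd_sum_range_sq_cofactor {d : ℤ} (hd : 3 ∣ d) (x : ℤ) :
    ¬ 3 ∣ 6 * x ^ 2 + 6 * x * (d + 1) + (d + 1) * (2 * d + 1) := by
  obtain ⟨k, rfl⟩ := hd
  rw [show 6 * x ^ 2 + 6 * x * (3 * k + 1) + (3 * k + 1) * (2 * (3 * k) + 1) =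
      3 * (2 * x ^ 2 + 2 * x * (3 * k + 1) + 6 * k ^ 2 + 3 * k) + 1 by ring]
  omega

theorem padicValInt_pow (p : ℕ) [Fact p.Prime] (y : ℤ) (n : ℕ) :
    padicValInt p (y ^ n) = n * padicValInt p y := by
  simp only [padicValInt, Int.natAbs_pow, padicValNat.pow]

theorem padicValInt_three_six_mul {z : ℤ} (hz : z ≠ 0) :
    padicValInt 3 (6 * z) = padicValInt 3 z + 1 := by
  rw [show 6 * z = 2 * z * (3 : ℕ) by push_cast; ring,
    padicValInt_mul_eq_succ _ (mul_ne_zero two_ne_zero hz),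
    padicValInt.mul two_ne_zero hz, padicValInt.eq_zero_of_not_dvd (by decide), zero_add]

theorem exponent_divides_of_three_adic_valuation_general (d : ℕ)
    (hr : 2 ≤ padicValNat 3 d) (n : ℕ) (x y : ℤ)
    (h : ∑ i ∈ Finset.range d, (x + (i : ℤ) + 1) ^ 2 = y ^ n) :
    n ∣ padicValNat 3 d - 1 := by
  set A : ℤ := 6 * x ^ 2 + 6 * x * (d + 1) + (d + 1) * (2 * d + 1)
  have hdA : (d : ℤ) * A = 6 * y ^ n := by rw [← h, six_mul_sum_range_sq_add]
  have hd : (d : ℤ) ≠ 0 := by rintro h0; simp [Int.natCast_eq_zero.mp h0] at hr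
  have h3d : (3 : ℤ) ∣ d := Int.natCast_dvd_natCast.mpr <|
    dvd_of_one_le_padicValNat (p := 3) (by omega)
  have hA : ¬ 3 ∣ A := not_three_dvd_sum_range_sq_cofactor h3d x
  have hA0 : A ≠ 0 := by rintro h0; simp [h0] at hA
  have hyn : y ^ n ≠ 0 := by
    rintro h0
    rw [h0, mul_zero] at hdA
    exact mul_ne_zero hd hA0 hdA
  have hval : padicValNat 3 d = n * padicValInt 3 y + 1 := by
    have := congrArg (padicValInt 3) hdA
    rwa [padicValInt.mul hd hA0, padicValInt.eq_zero_of_not_dvd hA, padicValInt.of_nat, add_zero,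
      padicValInt_three_six_mul hyn, padicValInt_pow] at this
  exact ⟨padicValInt 3 y, by omega⟩

/-- If `r = ord₃(d) ≥ 2` and the sum of `d` consecutive squares is `y^n` with
`n ≥ 2`, then `n ∣ r - 1`. -/
theorem exponent_divides_of_three_adic_valuation (d : ℕ) (hd : 0 < d)
    (hr : 2 ≤ padicValNat 3 d) (n : ℕ) (hn : 2 ≤ n) (x y : ℤ)
    (h : ∑ i ∈ Finset.range d, (x + (i : ℤ) + 1) ^ 2 = y ^ n) :
    n ∣ padicValNat 3 d - 1 :=
  exponent_divides_of_three_adic_valuation_general d hr n x y h
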